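/- Let α = 2√3 − 3 and γ = (3−√3)/2. For every ξ > 0 there exist δ > 0 and n₀ such that the following holds for all n ≥ n₀. Suppose G is an n-vertex graph and V₁ ∪ V₂ = V(G) is a partition such that (i) the total number of type-1 and type-2 four-vertex paths in G with respect to (V₁,V₂) is at most δn⁴, (ii) | |V₁| − γn | ≤ δn, and (iii) |G[V₂]| ≤ (α/2 + δ)·|V₂|². Then |G| ≤ (α/2 + ξ)·n². Moreover, if additionally |G| ≥ (α/2 − δ)·n², then either |G[V₁,V₂]| ≤ ξn² or |G[V₁]| + |G[V₂]| ≤ ξn². -/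

import Mathlib

/-!
Fix `k ≈ εn`. An edge `bc` inside `V₁` such that `b` has `k` neighbours in `V₁` and `c` has `k`
neighbours in `V₂` extends to about `k²` type-1 paths, and an edge inside `V₂` whose ends both have
`k` neighbours in `V₁` extends to about `k²` type-2 paths; so there are only `O(εn²)` such edges.
Let `W ⊆ V₁` and `U ⊆ V₂` be the vertices with at least `k` neighbours in `V₂` resp. `V₁`. Up to
`O(εn²)` this gives `|G[V₁]| ≤ |V₁ \ W|²/2`, `|G[V₁,V₂]| ≤ min (|W||V₂|) (|U||V₁|)` and
`|G[V₂]| ≤ min (α|V₂|²/2) (|V₂ \ U||V₂|)`. For `|V₁| ≈ γn` the sum of these bounds is at most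
`|V₁||V₂| ≈ αn²/2`, with near-equality only near `W = V₁, U = V₂` (no edges inside the parts) or
`W = ∅` (no crossing edges).
-/

open scoped Classical

noncomputable section

/-- The constant `α = 2√3 − 3`. -/
def alphaC : ℝ := 2 * Real.sqrt 3 - 3

/-- The constant `γ = (3 − √3)/2`. -/
def gammaC : ℝ := (3 - Real.sqrt 3) / 2

/-- `G` is a (simple) graph, given by its edge set of 2-element subsets of `Fin n`. -/
def IsGraph {n : ℕ} (G : Finset (Finset (Fin n))) : Prop :=
  ∀ e ∈ G, e.card = 2

/-- The number of 4-vertex paths `(a,b,c,d)` of type 1 with respect to `(V₁,V₂)`: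
four distinct vertices with `{a,b}, {b,c}, {c,d}` edges, `a,b,c ∈ V₁` and `d ∈ V₂`. -/
def type1Paths {n : ℕ} (G : Finset (Finset (Fin n))) (V₁ V₂ : Finset (Fin n)) : ℕ :=
  (Finset.univ.filter (fun p : Fin n × Fin n × Fin n × Fin n =>
    ({p.1, p.2.1, p.2.2.1, p.2.2.2} : Finset (Fin n)).card = 4 ∧
    ({p.1, p.2.1} : Finset (Fin n)) ∈ G ∧
    ({p.2.1, p.2.2.1} : Finset (Fin n)) ∈ G ∧
    ({p.2.2.1, p.2.2.2} : Finset (Fin n)) ∈ G ∧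
    p.1 ∈ V₁ ∧ p.2.1 ∈ V₁ ∧ p.2.2.1 ∈ V₁ ∧ p.2.2.2 ∈ V₂)).card

/-- The number of 4-vertex paths `(a,b,c,d)` of type 2 with respect to `(V₁,V₂)`:
four distinct vertices with `{a,b}, {b,c}, {c,d}` edges, `a,d ∈ V₁` and `b,c ∈ V₂`. -/
def type2Paths {n : ℕ} (G : Finset (Finset (Fin n))) (V₁ V₂ : Finset (Fin n)) : ℕ :=
  (Finset.univ.filter (fun p : Fin n × Fin n × Fin n × Fin n =>
    ({p.1, p.2.1, p.2.2.1, p.2.2.2} : Finset (Fin n)).card = 4 ∧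
    ({p.1, p.2.1} : Finset (Fin n)) ∈ G ∧
    ({p.2.1, p.2.2.1} : Finset (Fin n)) ∈ G ∧
    ({p.2.2.1, p.2.2.2} : Finset (Fin n)) ∈ G ∧
    p.1 ∈ V₁ ∧ p.2.2.2 ∈ V₁ ∧ p.2.1 ∈ V₂ ∧ p.2.2.1 ∈ V₂)).card

open Finset

lemma card_four {α : Type*} [DecidableEq α] {a b c d : α} (hab : a ≠ b) (hac : a ≠ c) (had : a ≠ d)
    (hbc : b ≠ c) (hbd : b ≠ d) (hcd : c ≠ d) : ({a, b, c, d} : Finset α).card = 4 := by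
  rw [card_insert_of_notMem (by simp [hab, hac, had]), card_insert_of_notMem (by simp [hbc, hbd]),
    card_pair hcd]

lemma exists_eq_pair_of_mem {α : Type*} [DecidableEq α] {e : Finset α} {y : α} (he : e.card = 2)
    (hy : y ∈ e) : ∃ x ∈ e, e = {x, y} := by
  obtain ⟨a, b, -, rfl⟩ := card_eq_two.1 he
  rcases mem_insert.1 hy with rfl | hy
  · exact ⟨b, by simp, pair_comm _ _⟩
  · exact ⟨a, by simp, by rw [mem_singleton.1 hy]⟩

lemma card_mul_le_card_of_extend {α : Type*} [DecidableEq α] (P : Finset (α × α))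
    (F : α × α → Finset (α × α)) (S : Finset (α × α × α × α)) (K : ℕ)
    (hK : ∀ z ∈ P, K ≤ (F z).card) (hS : ∀ z ∈ P, ∀ w ∈ F z, (w.1, z.1, z.2, w.2) ∈ S) :
    P.card * K ≤ S.card :=
  calc P.card * K ≤ ∑ z ∈ P, (F z).card := card_nsmul_le_sum P _ K hK
    _ = (P.sigma F).card := (card_sigma P F).symm
    _ ≤ S.card := card_le_card_of_injOn (fun x => (x.2.1, x.1.1, x.1.2, x.2.2))
        (fun x hx => hS x.1 (mem_sigma.1 hx).1 x.2 (mem_sigma.1 hx).2)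
        (by
          rintro ⟨⟨b, c⟩, ⟨a, d⟩⟩ - ⟨⟨b', c'⟩, ⟨a', d'⟩⟩ - h
          simp only [Prod.mk.injEq] at h
          obtain ⟨rfl, rfl, rfl, rfl⟩ := h
          rfl)

lemma sub_one_mul_card_le_card_filter_ne {α : Type*} [DecidableEq α] (A B : Finset α) :
    (A.card - 1) * B.card ≤ ((A ×ˢ B).filter (fun w => w.1 ≠ w.2)).card := by
  have hdiag : ((A ×ˢ B).filter (fun w => ¬ w.1 ≠ w.2)).card ≤ B.card :=
    card_le_card_of_injOn Prod.snd (fun w hw => (mem_product.1 (mem_filter.1 hw).1).2)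
      (fun w hw w' hw' h => Prod.ext (by
        simp only [coe_filter, ne_eq, not_not, Set.mem_ofPred_eq] at hw hw'
        rw [hw.2, hw'.2, h]) h)
  have := card_filter_add_card_filter_not (s := A ×ˢ B) (fun w => w.1 ≠ w.2)
  rw [card_product] at this
  rw [Nat.sub_one_mul]
  omega

section Counting

variable {n : ℕ} (G : Finset (Finset (Fin n)))

def nbhd (S : Finset (Fin n)) (v : Fin n) : Finset (Fin n) :=
  S.filter (fun u => ({v, u} : Finset (Fin n)) ∈ G)

def arcs (S T : Finset (Fin n)) : Finset (Fin n × Fin n) :=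
  (S ×ˢ T).filter (fun z => ({z.1, z.2} : Finset (Fin n)) ∈ G)

def highDegree (S T : Finset (Fin n)) (k : ℕ) : Finset (Fin n) :=
  S.filter (fun v => k ≤ (nbhd G T v).card)

variable {G}

lemma mem_nbhd {S : Finset (Fin n)} {v u : Fin n} : u ∈ nbhd G S v ↔ u ∈ S ∧ {v, u} ∈ G :=
  mem_filter

lemma mem_highDegree {S T : Finset (Fin n)} {k : ℕ} {v : Fin n} :
    v ∈ highDegree G S T k ↔ v ∈ S ∧ k ≤ (nbhd G T v).card :=
  mem_filter

lemma mem_arcs {S T : Finset (Fin n)} {z : Fin n × Fin n} :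
    z ∈ arcs G S T ↔ (z.1 ∈ S ∧ z.2 ∈ T) ∧ {z.1, z.2} ∈ G := by
  simp [arcs]

lemma IsGraph.ne_of_pair_mem (hG : IsGraph G) {x y : Fin n} (h : {x, y} ∈ G) : x ≠ y := by
  rintro rfl
  simpa using hG _ h

lemma card_arcs_comm (S T : Finset (Fin n)) : (arcs G S T).card = (arcs G T S).card := by
  refine card_nbij' Prod.swap Prod.swap ?_ ?_ (fun _ _ => rfl) (fun _ _ => rfl) <;>
  · intro z hz
    simp only [arcs, coe_filter, mem_product, Set.mem_ofPred_eq, Prod.fst_swap, Prod.snd_swap]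
      at hz ⊢
    exact ⟨hz.1.symm, pair_comm z.1 z.2 ▸ hz.2⟩

lemma card_arcs_le_card_mul (S T : Finset (Fin n)) : (arcs G S T).card ≤ S.card * T.card :=
  (card_filter_le _ _).trans (card_product S T).le

lemma card_arcs_le {S T A : Finset (Fin n)} {k : ℕ}
    (hdeg : ∀ v ∈ S, v ∉ A → (nbhd G T v).card ≤ k) :
    (arcs G S T).card ≤ (arcs G A T).card + S.card * k := by
  rw [← card_filter_add_card_filter_not (p := fun z => z.1 ∈ A)]
  gcongr
  · intro z hz
    simp only [arcs, mem_filter, mem_product] at hz ⊢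
    exact ⟨⟨hz.2, hz.1.1.2⟩, hz.1.2⟩
  · rw [mul_comm]
    refine card_le_mul_card_image_of_maps_to (f := Prod.fst)
      (fun z hz => (mem_product.1 (mem_filter.1 (mem_filter.1 hz).1).1).1) k fun v hv => ?_
    by_cases hvA : v ∈ A
    · refine (card_eq_zero.2 (filter_eq_empty_iff.2 fun z hz hzv => ?_)).trans_le k.zero_le
      exact (mem_filter.1 hz).2 (hzv ▸ hvA)
    refine le_trans (card_le_card_of_injOn Prod.snd (fun z hz => ?_) ?_) (hdeg v hv hvA)
    · simp only [coe_filter, mem_filter, mem_product, Set.mem_ofPred_eq] at hz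
      obtain ⟨⟨⟨⟨-, hzT⟩, hzG⟩, -⟩, rfl⟩ := hz
      exact mem_filter.2 ⟨hzT, hzG⟩
    · intro z hz z' hz' h
      simp only [coe_filter, Set.mem_ofPred_eq] at hz hz'
      exact Prod.ext (hz.2.trans hz'.2.symm) h

lemma card_le_card_arcs {F : Finset (Finset (Fin n))} {S T : Finset (Fin n)} (hFG : F ⊆ G)
    (hF : ∀ e ∈ F, ∃ x ∈ S, ∃ y ∈ T, e = {x, y}) : F.card ≤ (arcs G S T).card :=
  card_le_card_of_surjOn (fun z => {z.1, z.2}) fun e he => by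
    obtain ⟨x, hx, y, hy, rfl⟩ := hF e he
    exact ⟨(x, y), by simp [arcs, hx, hy, hFG he], rfl⟩

lemma card_edges_le_choose_add_card_arcs (hG : IsGraph G) (S T : Finset (Fin n)) :
    (G.filter (· ⊆ S)).card ≤ (S \ T).card.choose 2 + (arcs G S T).card := by
  rw [← card_filter_add_card_filter_not (p := fun e => Disjoint e T)]
  gcongr
  · rw [← card_powersetCard]
    refine card_le_card fun e he => ?_
    simp only [mem_filter] at he
    exact mem_powersetCard.2 ⟨subset_sdiff.2 ⟨he.1.2, he.2⟩, hG e he.1.1⟩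
  · refine card_le_card_arcs ((filter_subset _ _).trans (filter_subset _ _)) fun e he => ?_
    simp only [mem_filter] at he
    obtain ⟨y, hye, hyT⟩ := not_disjoint_iff.1 he.2
    obtain ⟨x, hxe, rfl⟩ := exists_eq_pair_of_mem (hG e he.1.1) hye
    exact ⟨x, he.1.2 hxe, y, hyT, rfl⟩

lemma card_edges_le_card_arcs_add_mul (hG : IsGraph G) (S T : Finset (Fin n)) :
    (G.filter (· ⊆ S)).card ≤ (arcs G T T).card + (S \ T).card * S.card := by
  rw [← card_filter_add_card_filter_not (p := fun e => e ⊆ T)]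
  gcongr
  · refine card_le_card_arcs ((filter_subset _ _).trans (filter_subset _ _)) fun e he => ?_
    simp only [mem_filter] at he
    obtain ⟨x, y, -, rfl⟩ := card_eq_two.1 (hG e he.1.1)
    exact ⟨x, he.2 (by simp), y, he.2 (by simp), rfl⟩
  · refine le_trans (card_le_card_arcs ((filter_subset _ _).trans (filter_subset _ _))
      fun e he => ?_) (card_arcs_le_card_mul _ _)
    simp only [mem_filter] at he
    obtain ⟨y, hye, hyT⟩ := not_subset.1 he.2
    obtain ⟨x, hxe, rfl⟩ := exists_eq_pair_of_mem (hG e he.1.1) hye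
    exact ⟨y, mem_sdiff.2 ⟨he.1.2 hye, hyT⟩, x, he.1.2 hxe, pair_comm _ _⟩

lemma card_cross_edges_le_card_arcs (hG : IsGraph G) (V₁ : Finset (Fin n)) :
    (G.filter (fun e => (e ∩ V₁).card = 1)).card ≤ (arcs G V₁ V₁ᶜ).card := by
  refine card_le_card_arcs (filter_subset _ _) fun e he => ?_
  obtain ⟨heG, he₁⟩ := mem_filter.1 he
  obtain ⟨x, hx⟩ := card_eq_one.1 he₁
  obtain ⟨hxe, hxV⟩ := mem_inter.1 (hx ▸ mem_singleton_self x)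
  obtain ⟨y, hye, rfl⟩ := exists_eq_pair_of_mem (hG e heG) hxe
  refine ⟨x, hxV, y, mem_compl.2 fun hyV => ?_, pair_comm _ _⟩
  have hyx : y = x := mem_singleton.1 (hx ▸ mem_inter.2 ⟨hye, hyV⟩)
  exact hG.ne_of_pair_mem heG hyx

lemma card_eq_add_card_cross_add (hG : IsGraph G) (V₁ : Finset (Fin n)) :
    G.card = (G.filter (· ⊆ V₁)).card + (G.filter (fun e => (e ∩ V₁).card = 1)).card
      + (G.filter (· ⊆ V₁ᶜ)).card := by
  have hmaps : ∀ e ∈ G, (e ∩ V₁).card ∈ range 3 := fun e he =>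
    mem_range.2 (Nat.lt_succ_of_le ((card_le_card inter_subset_left).trans (hG e he).le))
  rw [card_eq_sum_card_fiberwise hmaps]
  simp only [sum_range_succ, range_zero, sum_empty, zero_add]
  have h₂ : G.filter (fun e => (e ∩ V₁).card = 2) = G.filter (· ⊆ V₁) := by
    refine filter_congr fun e he => ?_
    rw [← inter_eq_left, ← hG e he]
    exact ⟨fun h => eq_of_subset_of_card_le inter_subset_left h.ge, fun h => by rw [h]⟩
  have h₀ : G.filter (fun e => (e ∩ V₁).card = 0) = G.filter (· ⊆ V₁ᶜ) := by
    refine filter_congr fun e _ => ?_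
    rw [card_eq_zero, ← disjoint_iff_inter_eq_empty, subset_compl_iff_disjoint_right]
  rw [h₂, h₀]
  ring

lemma card_arcs_mul_le_type1Paths (hG : IsGraph G) {V₁ V₂ : Finset (Fin n)} (hD : Disjoint V₁ V₂)
    (k : ℕ) :
    (arcs G (highDegree G V₁ V₁ k) (highDegree G V₁ V₂ k)).card * ((k - 1) * k)
      ≤ type1Paths G V₁ V₂ := by
  refine card_mul_le_card_of_extend _ (fun z => (nbhd G V₁ z.1).erase z.2 ×ˢ nbhd G V₂ z.2) _ _
    (fun z hz => ?_) (fun z hz w hw => ?_)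
  · obtain ⟨⟨hb, hc⟩, -⟩ := mem_arcs.1 hz
    rw [card_product]
    exact Nat.mul_le_mul (Nat.sub_le_sub_right (mem_highDegree.1 hb).2 1 |>.trans
      (pred_card_le_card_erase)) (mem_highDegree.1 hc).2
  · obtain ⟨⟨hb, hc⟩, hbc⟩ := mem_arcs.1 hz
    obtain ⟨hb, -⟩ := mem_highDegree.1 hb
    obtain ⟨hc, -⟩ := mem_highDegree.1 hc
    obtain ⟨ha, hd⟩ := mem_product.1 hw
    obtain ⟨hac, ha⟩ := mem_erase.1 ha
    obtain ⟨ha, hab⟩ := mem_nbhd.1 ha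
    obtain ⟨hd, hcd⟩ := mem_nbhd.1 hd
    have hne := disjoint_iff_ne.1 hD
    simp only [mem_filter, mem_univ, true_and]
    exact ⟨card_four (hG.ne_of_pair_mem hab).symm hac (hne _ ha _ hd) (hG.ne_of_pair_mem hbc)
        (hne _ hb _ hd) (hne _ hc _ hd), pair_comm w.1 z.1 ▸ hab, hbc, hcd, ha, hb, hc, hd⟩

lemma card_arcs_mul_le_type2Paths (hG : IsGraph G) {V₁ V₂ : Finset (Fin n)} (hD : Disjoint V₁ V₂)
    (k : ℕ) :
    (arcs G (highDegree G V₂ V₁ k) (highDegree G V₂ V₁ k)).card * ((k - 1) * k)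
      ≤ type2Paths G V₁ V₂ := by
  refine card_mul_le_card_of_extend _
    (fun z => (nbhd G V₁ z.1 ×ˢ nbhd G V₁ z.2).filter (fun w => w.1 ≠ w.2)) _ _
    (fun z hz => ?_) (fun z hz w hw => ?_)
  · obtain ⟨⟨hb, hc⟩, -⟩ := mem_arcs.1 hz
    exact (Nat.mul_le_mul (Nat.sub_le_sub_right (mem_highDegree.1 hb).2 1)
      (mem_highDegree.1 hc).2).trans (sub_one_mul_card_le_card_filter_ne _ _)
  · obtain ⟨⟨hb, hc⟩, hbc⟩ := mem_arcs.1 hz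
    obtain ⟨hb, -⟩ := mem_highDegree.1 hb
    obtain ⟨hc, -⟩ := mem_highDegree.1 hc
    obtain ⟨hw, had⟩ := mem_filter.1 hw
    obtain ⟨ha, hab⟩ := mem_nbhd.1 (mem_product.1 hw).1
    obtain ⟨hd, hcd⟩ := mem_nbhd.1 (mem_product.1 hw).2
    have hne := disjoint_iff_ne.1 hD
    simp only [mem_filter, mem_univ, true_and]
    exact ⟨card_four (hne _ ha _ hb) (hne _ ha _ hc) had (hG.ne_of_pair_mem hbc)
        (hne _ hd _ hb).symm (hne _ hd _ hc).symm, pair_comm w.1 z.1 ▸ hab, hbc, hcd,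
        ha, hd, hb, hc⟩

lemma card_nbhd_le_of_notMem_highDegree {S T : Finset (Fin n)} {k : ℕ} {v : Fin n} (hv : v ∈ S)
    (hvk : v ∉ highDegree G S T k) : (nbhd G T v).card ≤ k := by
  rw [mem_highDegree, not_and, not_le] at hvk
  exact (hvk hv).le

lemma card_edges_le_of_highDegree (hG : IsGraph G) (V₁ : Finset (Fin n)) (k : ℕ) :
    (G.filter (· ⊆ V₁)).card ≤ (V₁ \ highDegree G V₁ V₁ᶜ k).card.choose 2
      + (arcs G (highDegree G V₁ V₁ k) (highDegree G V₁ V₁ᶜ k)).card + V₁.card * k := by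
  refine (card_edges_le_choose_add_card_arcs hG V₁ (highDegree G V₁ V₁ᶜ k)).trans ?_
  rw [add_assoc]
  gcongr
  refine card_arcs_le fun v hv hvk => le_trans (card_le_card ?_)
    (card_nbhd_le_of_notMem_highDegree hv hvk)
  exact filter_subset_filter _ (filter_subset _ _)

lemma card_cross_edges_le_left (hG : IsGraph G) (V₁ : Finset (Fin n)) (k : ℕ) :
    (G.filter (fun e => (e ∩ V₁).card = 1)).card
      ≤ (highDegree G V₁ V₁ᶜ k).card * V₁ᶜ.card + V₁.card * k :=
  calc _ ≤ (arcs G V₁ V₁ᶜ).card := card_cross_edges_le_card_arcs hG V₁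
    _ ≤ (arcs G (highDegree G V₁ V₁ᶜ k) V₁ᶜ).card + V₁.card * k :=
      card_arcs_le fun _ hv hvk => card_nbhd_le_of_notMem_highDegree hv hvk
    _ ≤ _ := by gcongr; exact card_arcs_le_card_mul _ _

lemma card_cross_edges_le_right (hG : IsGraph G) (V₁ : Finset (Fin n)) (k : ℕ) :
    (G.filter (fun e => (e ∩ V₁).card = 1)).card
      ≤ (highDegree G V₁ᶜ V₁ k).card * V₁.card + V₁ᶜ.card * k :=
  calc _ ≤ (arcs G V₁ᶜ V₁).card :=
        (card_cross_edges_le_card_arcs hG V₁).trans_eq (card_arcs_comm _ _)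
    _ ≤ (arcs G (highDegree G V₁ᶜ V₁ k) V₁).card + V₁ᶜ.card * k :=
      card_arcs_le fun _ hv hvk => card_nbhd_le_of_notMem_highDegree hv hvk
    _ ≤ _ := by gcongr; exact card_arcs_le_card_mul _ _

end Counting

/-- The data of a vertex partition `V₁ ∪ V₂` of an `N`-vertex graph, at scale `N`: `p = |V₁|`,
`q = |V₂|`, `a = |G[V₁]|`, `b = |G[V₁,V₂]|`, `c = |G[V₂]|`, where `ω` counts the vertices of `V₁`
and `υ` those of `V₂` that have many neighbours in `V₂` resp. `V₁`. -/
structure EdgeProfile (N ε p q ω υ a b c : ℝ) : Prop where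
  add_eq : p + q = N
  abs_sub_le : |p - gammaC * N| ≤ ε * N
  ω_nonneg : 0 ≤ ω
  ω_le : ω ≤ p
  υ_nonneg : 0 ≤ υ
  υ_le : υ ≤ q
  a_le : a ≤ (p - ω) ^ 2 / 2 + 4 * ε * N ^ 2
  b_le_ω : b ≤ ω * q + 4 * ε * N ^ 2
  b_le_υ : b ≤ υ * p + 4 * ε * N ^ 2
  c_le_alphaC : c ≤ alphaC / 2 * q ^ 2 + 4 * ε * N ^ 2
  c_le_υ : c ≤ (q - υ) * q + 4 * ε * N ^ 2

lemma cast_le_of_mul_le {P T k : ℕ} {ε N : ℝ} (hk : ε * N ≤ k) (h4 : 4 ≤ ε * N)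
    (hPT : P * ((k - 1) * k) ≤ T) (hT : (T : ℝ) ≤ ε ^ 3 * N ^ 4) : (P : ℝ) ≤ 2 * ε * N ^ 2 := by
  have hk1 : 1 ≤ k := by exact_mod_cast (by linarith : (1 : ℝ) ≤ k)
  have hPT' : (P : ℝ) * (((k : ℝ) - 1) * k) ≤ T := by
    rw [← Nat.cast_pred hk1]; exact_mod_cast hPT
  have hm : ε * N / 2 * (ε * N) ≤ ((k : ℝ) - 1) * k :=
    mul_le_mul (by linarith) hk (by linarith) (by linarith)
  refine le_of_mul_le_mul_right (a := ε * N / 2 * (ε * N)) ?_ (by nlinarith)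
  calc (P : ℝ) * (ε * N / 2 * (ε * N)) ≤ P * (((k : ℝ) - 1) * k) :=
        mul_le_mul_of_nonneg_left hm P.cast_nonneg
    _ ≤ ε ^ 3 * N ^ 4 := hPT'.trans hT
    _ = 2 * ε * N ^ 2 * (ε * N / 2 * (ε * N)) := by ring

lemma cast_mul_ceil_le {m n : ℕ} {ε : ℝ} (hm : m ≤ n) (h1 : 1 ≤ ε * n) :
    ((m * ⌈ε * n⌉₊ : ℕ) : ℝ) ≤ 2 * ε * n ^ 2 := by
  have hk : (⌈ε * n⌉₊ : ℝ) ≤ 2 * ε * n := (Nat.ceil_lt_add_one (by linarith)).le.trans (by linarith)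
  push_cast
  calc (m : ℝ) * ⌈ε * n⌉₊ ≤ n * (2 * ε * n) :=
        mul_le_mul (by exact_mod_cast hm) hk (by positivity) (by positivity)
    _ = 2 * ε * n ^ 2 := by ring

lemma edgeProfile_of_few_paths {n : ℕ} {G : Finset (Finset (Fin n))} (hG : IsGraph G)
    (V₁ : Finset (Fin n)) {ε : ℝ} (hε : 0 < ε) (hε1 : ε ≤ 1) (hεn : 4 ≤ ε * n)
    (hpaths : ((type1Paths G V₁ V₁ᶜ + type2Paths G V₁ V₁ᶜ : ℕ) : ℝ) ≤ ε ^ 3 * n ^ 4)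
    (hV₁ : |(V₁.card : ℝ) - gammaC * n| ≤ ε ^ 3 * n)
    (hE₂ : ((G.filter (· ⊆ V₁ᶜ)).card : ℝ) ≤ (alphaC / 2 + ε ^ 3) * (V₁ᶜ.card : ℝ) ^ 2) :
    EdgeProfile n ε V₁.card V₁ᶜ.card (highDegree G V₁ V₁ᶜ ⌈ε * n⌉₊).card
      (highDegree G V₁ᶜ V₁ ⌈ε * n⌉₊).card (G.filter (· ⊆ V₁)).card
      (G.filter (fun e => (e ∩ V₁).card = 1)).card (G.filter (· ⊆ V₁ᶜ)).card := by
  set k := ⌈ε * n⌉₊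
  set W := highDegree G V₁ V₁ᶜ k
  set U := highDegree G V₁ᶜ V₁ k
  have hk : ε * n ≤ k := Nat.le_ceil _
  have hε3 : ε ^ 3 ≤ ε := pow_le_of_le_one hε.le hε1 (by norm_num)
  have hn : (0 : ℝ) ≤ n := n.cast_nonneg
  have hWV : W ⊆ V₁ := filter_subset _ _
  have hUV : U ⊆ V₁ᶜ := filter_subset _ _
  have hW := card_le_card hWV
  have hU := card_le_card hUV
  have hq : (V₁ᶜ.card : ℝ) ≤ n := by exact_mod_cast (card_le_univ _).trans_eq (Fintype.card_fin n)
  have hnk : ∀ {m}, m ≤ n → ((m * k : ℕ) : ℝ) ≤ 2 * ε * n ^ 2 :=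
    fun hm => cast_mul_ceil_le hm (by linarith)
  have hT₁ := cast_le_of_mul_le hk hεn (card_arcs_mul_le_type1Paths hG disjoint_compl_right k)
    ((Nat.cast_le.2 (Nat.le_add_right _ _)).trans hpaths)
  have hT₂ := cast_le_of_mul_le hk hεn (card_arcs_mul_le_type2Paths hG disjoint_compl_right k)
    ((Nat.cast_le.2 (Nat.le_add_left _ _)).trans hpaths)
  have hnV₁ := hnk (card_le_univ V₁ |>.trans_eq (Fintype.card_fin n))
  have hnV₂ := hnk (card_le_univ V₁ᶜ |>.trans_eq (Fintype.card_fin n))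
  exact {
    add_eq := by exact_mod_cast (card_add_card_compl V₁).trans (Fintype.card_fin n)
    abs_sub_le := hV₁.trans (mul_le_mul_of_nonneg_right hε3 hn)
    ω_nonneg := W.card.cast_nonneg
    ω_le := by exact_mod_cast hW
    υ_nonneg := U.card.cast_nonneg
    υ_le := by exact_mod_cast hU
    a_le := by
      have h := card_edges_le_of_highDegree hG V₁ k
      have hm : ((V₁ \ W).card : ℝ) = V₁.card - W.card := by
        rw [card_sdiff_of_subset hWV, Nat.cast_sub hW]
      have hc := Nat.cast_le (α := ℝ) |>.2 h
      push_cast [Nat.cast_choose_two, hm] at hc hnV₁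
      nlinarith
    b_le_ω := by
      have h := Nat.cast_le (α := ℝ) |>.2 (card_cross_edges_le_left hG V₁ k)
      push_cast at h hnV₁
      linarith
    b_le_υ := by
      have h := Nat.cast_le (α := ℝ) |>.2 (card_cross_edges_le_right hG V₁ k)
      push_cast at h hnV₂
      linarith
    c_le_alphaC := by
      nlinarith [mul_le_mul hε3 (pow_le_pow_left₀ (Nat.cast_nonneg _) hq 2) (by positivity) hε.le]
    c_le_υ := by
      have h := Nat.cast_le (α := ℝ) |>.2 (card_edges_le_card_arcs_add_mul hG V₁ᶜ U)
      have hm : ((V₁ᶜ \ U).card : ℝ) = V₁ᶜ.card - U.card := by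
        rw [card_sdiff_of_subset hUV, Nat.cast_sub hU]
      push_cast [hm] at h
      linarith }

lemma sqrt_three_bounds : √3 ^ 2 = 3 ∧ 1.7320 ≤ √3 ∧ √3 ≤ 1.7321 := by
  have h : √3 ^ 2 = 3 := Real.sq_sqrt (by norm_num)
  exact ⟨h, by nlinarith [Real.sqrt_nonneg 3], by nlinarith [Real.sqrt_nonneg 3]⟩

namespace EdgeProfile

variable {N ε ξ p q ω υ a b c : ℝ}

lemma normalize (h : EdgeProfile N ε p q ω υ a b c) (hN : 0 < N) :
    EdgeProfile 1 ε (p / N) (q / N) (ω / N) (υ / N) (a / N ^ 2) (b / N ^ 2) (c / N ^ 2) where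
  add_eq := by rw [← add_div, h.add_eq, div_self hN.ne']
  abs_sub_le := by
    rw [mul_one, mul_one, ← mul_div_cancel_right₀ gammaC hN.ne', ← sub_div, abs_div,
      abs_of_pos hN, div_le_iff₀ hN]
    exact h.abs_sub_le
  ω_nonneg := div_nonneg h.ω_nonneg hN.le
  ω_le := div_le_div_of_nonneg_right h.ω_le hN.le
  υ_nonneg := div_nonneg h.υ_nonneg hN.le
  υ_le := div_le_div_of_nonneg_right h.υ_le hN.le
  a_le := by
    rw [div_le_iff₀ (by positivity)]; exact h.a_le.trans_eq (by field_simp)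
  b_le_ω := by
    rw [div_le_iff₀ (by positivity)]; exact h.b_le_ω.trans_eq (by field_simp)
  b_le_υ := by
    rw [div_le_iff₀ (by positivity)]; exact h.b_le_υ.trans_eq (by field_simp)
  c_le_alphaC := by
    rw [div_le_iff₀ (by positivity)]; exact h.c_le_alphaC.trans_eq (by field_simp)
  c_le_υ := by
    rw [div_le_iff₀ (by positivity)]; exact h.c_le_υ.trans_eq (by field_simp)

lemma ε_nonneg (h : EdgeProfile 1 ε p q ω υ a b c) : 0 ≤ ε := by
  simpa using (abs_nonneg _).trans h.abs_sub_le

lemma p_bounds (h : EdgeProfile 1 ε p q ω υ a b c) (hε : ε ≤ 1 / 1000) :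
    0.632 ≤ p ∧ p ≤ 0.636 := by
  obtain ⟨-, hs1, hs2⟩ := sqrt_three_bounds
  have hp := abs_le.1 h.abs_sub_le
  simp only [gammaC, mul_one] at hp
  constructor <;> linarith [hp.1, hp.2]

lemma abs_mul_sub_alphaC_le (h : EdgeProfile 1 ε p q ω υ a b c) (hε : ε ≤ 1 / 1000) :
    |p * q - alphaC / 2| ≤ ε / 3 := by
  obtain ⟨hs, hs1, hs2⟩ := sqrt_three_bounds
  obtain ⟨hpl, hpu⟩ := h.p_bounds hε
  have hp := abs_le.1 h.abs_sub_le
  simp only [gammaC, mul_one] at hp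
  obtain rfl : q = 1 - p := by linarith [h.add_eq]
  have hfac : p * (1 - p) - alphaC / 2 = -(p - (3 - √3) / 2) * (p - (√3 - 1) / 2) := by
    simp only [alphaC]; linear_combination (-1 / 4) * hs
  rw [hfac, abs_le]
  constructor <;>
    nlinarith [mul_nonneg (sub_nonneg.2 hp.2) (by linarith : (0:ℝ) ≤ p - (√3 - 1) / 2),
      mul_nonneg (neg_le_iff_add_nonneg.1 hp.1) (by linarith : (0:ℝ) ≤ p - (√3 - 1) / 2),
      mul_nonneg (sub_nonneg.2 hp.2) (by linarith : (0:ℝ) ≤ 0.28 - (p - (√3 - 1) / 2)),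
      mul_nonneg (neg_le_iff_add_nonneg.1 hp.1) (by linarith : (0:ℝ) ≤ 0.28 - (p - (√3 - 1) / 2))]

lemma sub_le_mul_sqrt_three (h : EdgeProfile 1 ε p q ω υ a b c) : p - 3 * ε ≤ q * √3 := by
  obtain ⟨hs, hs1, hs2⟩ := sqrt_three_bounds
  have hε := h.ε_nonneg
  have hp := abs_le.1 h.abs_sub_le
  simp only [gammaC, mul_one] at hp
  obtain rfl : q = 1 - p := by linarith [h.add_eq]
  nlinarith [mul_nonneg (sub_nonneg.2 hp.2) (by linarith : (0:ℝ) ≤ √3 + 1)]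

lemma mul_b_add_c_le (h : EdgeProfile 1 ε p q ω υ a b c) (hp : 0 < p) (hqp : q ≤ p) :
    p * (b + c) ≤ p * q ^ 2 + ω * q * (p - q) + 8 * p * ε := by
  have hb₁ := h.b_le_ω; have hb₂ := h.b_le_υ; have hc := h.c_le_υ
  have hq := h.υ_nonneg.trans h.υ_le
  rcases le_or_gt (υ * p) (ω * q) with hc' | hc'
  · nlinarith [mul_nonneg (sub_nonneg.2 hqp) (sub_nonneg.2 hc')]
  · nlinarith [mul_le_mul_of_nonneg_left hc'.le hq]

lemma sum_le_quadratic (h : EdgeProfile 1 ε p q ω υ a b c) :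
    a + b + c ≤ p * q + ((p - ω) - q * (2 - √3)) * ((p - ω) - q * √3) / 2 + 12 * ε := by
  have hfac : ((p - ω) - q * (2 - √3)) * ((p - ω) - q * √3) / 2
      = (p - ω) ^ 2 / 2 - (p - ω) * q + alphaC / 2 * q ^ 2 := by
    simp only [alphaC]; linear_combination (-q ^ 2 / 2) * sqrt_three_bounds.1
  linarith [h.a_le, h.b_le_ω, h.c_le_alphaC]

lemma mul_sum_le (h : EdgeProfile 1 ε p q ω υ a b c) (hε : ε ≤ 1 / 1000) :
    p * (a + b + c) ≤ p * (p * q) + p * (p - ω) ^ 2 / 2 - (p - ω) * q * (p - q) + 12 * p * ε := by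
  obtain ⟨hpl, hpu⟩ := h.p_bounds hε
  have hq : p + q = 1 := h.add_eq
  have hbc := h.mul_b_add_c_le (by linarith) (by linarith)
  nlinarith [mul_le_mul_of_nonneg_left h.a_le (by linarith : (0:ℝ) ≤ p)]

lemma sum_le_unit (h : EdgeProfile 1 ε p q ω υ a b c) (hε : ε ≤ 1 / 1000) :
    a + b + c ≤ alphaC / 2 + 14 * ε := by
  obtain ⟨hs, hs1, hs2⟩ := sqrt_three_bounds
  obtain ⟨hpl, hpu⟩ := h.p_bounds hε
  have hq : p + q = 1 := h.add_eq
  have hpq := abs_le.1 (h.abs_mul_sub_alphaC_le hε)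
  have hωp := h.ω_le
  have hω0 := h.ω_nonneg
  rcases le_or_gt (p - ω) (1 / 5) with ht | ht
  · -- the extra edges inside `V₁` are outweighed by the cross edges lost
    have key : p * (p - ω) ^ 2 ≤ 2 * (p - ω) * q * (p - q) := by
      nlinarith [mul_nonneg (sub_nonneg.2 hωp)
        (by nlinarith : (0:ℝ) ≤ 2 * q * (p - q) - p * (p - ω))]
    have hsum : p * (a + b + c) ≤ p * (p * q + 12 * ε) := by linarith [h.mul_sum_le hε]
    have := le_of_mul_le_mul_left hsum (by linarith)
    linarith
  · have hquad := h.sum_le_quadratic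
    have hy := h.sub_le_mul_sqrt_three
    have hx : 0 ≤ (p - ω) - q * (2 - √3) := by nlinarith
    have hx1 : (p - ω) - q * (2 - √3) ≤ 1 := by
      nlinarith [mul_nonneg (by linarith : (0:ℝ) ≤ q) (by linarith : (0:ℝ) ≤ 2 - √3)]
    nlinarith [mul_le_mul_of_nonneg_left (by linarith : (p - ω) - q * √3 ≤ 3 * ε) hx,
      mul_le_mul_of_nonneg_right hx1 (by linarith : (0:ℝ) ≤ 3 * ε)]

lemma sub_le_of_lt_b (h : EdgeProfile 1 ε p q ω υ a b c) (hξ : 0 < ξ) (hξ' : ξ ≤ 1 / 100)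
    (hεξ : ε ≤ ξ / 10000) (hS : alphaC / 2 - ε ≤ a + b + c) (hb : ξ < b) : p - ω ≤ 0.15 := by
  obtain ⟨hs, hs1, hs2⟩ := sqrt_three_bounds
  have hε0 := h.ε_nonneg
  obtain ⟨hpl, hpu⟩ := h.p_bounds (by linarith)
  have hq : p + q = 1 := h.add_eq
  have hpq := abs_le.1 (h.abs_mul_sub_alphaC_le (by linarith))
  have hω0 := h.ω_nonneg
  have hω : ξ - 4 * ε ≤ ω := by
    nlinarith [h.b_le_ω, mul_le_mul_of_nonneg_left (by linarith : q ≤ 1) hω0]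
  have hy : ξ / 2 ≤ q * √3 - (p - ω) := by linarith [h.sub_le_mul_sqrt_three]
  have hprod : -(27 * ε) ≤ ((p - ω) - q * (2 - √3)) * ((p - ω) - q * √3) := by
    linarith [h.sum_le_quadratic]
  by_contra! ht
  have hx : 0.05 ≤ (p - ω) - q * (2 - √3) := by
    nlinarith [mul_le_mul_of_nonneg_left (by linarith : q ≤ 0.368) (by linarith : (0:ℝ) ≤ 2 - √3)]
  nlinarith [mul_le_mul hx hy (by positivity) (by linarith)]

lemma sub_le_mul_ε_of_sub_le (h : EdgeProfile 1 ε p q ω υ a b c) (hε : ε ≤ 1 / 1000)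
    (hS : alphaC / 2 - ε ≤ a + b + c) (ht : p - ω ≤ 0.15) : p - ω ≤ 200 * ε := by
  have hε0 := h.ε_nonneg
  obtain ⟨hpl, hpu⟩ := h.p_bounds hε
  have hq : p + q = 1 := h.add_eq
  have hpq := abs_le.1 (h.abs_mul_sub_alphaC_le hε)
  have ht0 : 0 ≤ p - ω := sub_nonneg.2 h.ω_le
  have hlin : 0.048 * (p - ω) ≤ (p - ω) * q * (p - q) - p * (p - ω) ^ 2 / 2 := by
    nlinarith [mul_le_mul hpu ht ht0 (by norm_num),
      mul_nonneg ht0 (by nlinarith : (0:ℝ) ≤ q * (p - q) - 0.096)]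
  nlinarith [h.mul_sum_le hε, mul_le_mul_of_nonneg_left hS (by linarith : (0:ℝ) ≤ p)]

lemma a_add_c_le (h : EdgeProfile 1 ε p q ω υ a b c) (hε : ε ≤ 1 / 1000000)
    (hS : alphaC / 2 - ε ≤ a + b + c) (ht : p - ω ≤ 200 * ε) : a + c ≤ 30 * ε := by
  have hε0 := h.ε_nonneg
  obtain ⟨hpl, hpu⟩ := h.p_bounds (by linarith)
  have hq : p + q = 1 := h.add_eq
  have hpq := abs_le.1 (h.abs_mul_sub_alphaC_le (by linarith))
  have ht0 : 0 ≤ p - ω := sub_nonneg.2 h.ω_le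
  have ha : a ≤ 5 * ε := by
    nlinarith [h.a_le, mul_le_mul ht ht ht0 (by linarith), mul_le_mul_of_nonneg_left hε hε0]
  have hυ : (q - υ) * (p - q) ≤ 15 * ε := by
    nlinarith [h.b_le_υ, h.c_le_υ]
  have hυ' : q - υ ≤ 57 * ε := by
    nlinarith [mul_nonneg (sub_nonneg.2 h.υ_le) (by linarith : (0:ℝ) ≤ (p - q) - 0.264)]
  nlinarith [h.c_le_υ, mul_nonneg (sub_nonneg.2 h.υ_le) (by linarith : (0:ℝ) ≤ 0.368 - q)]

theorem sum_le (h : EdgeProfile N ε p q ω υ a b c) (hN : 0 < N) (hε : ε ≤ 1 / 1000) :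
    a + b + c ≤ (alphaC / 2 + 14 * ε) * N ^ 2 := by
  have := (h.normalize hN).sum_le_unit hε
  rwa [← add_div, ← add_div, div_le_iff₀ (by positivity)] at this

theorem b_le_or_a_add_c_le (h : EdgeProfile N ε p q ω υ a b c) (hN : 0 < N) (hξ : 0 < ξ)
    (hξ' : ξ ≤ 1 / 100) (hεξ : ε ≤ ξ / 10000) (hS : (alphaC / 2 - ε) * N ^ 2 ≤ a + b + c) :
    b ≤ ξ * N ^ 2 ∨ a + c ≤ ξ * N ^ 2 := by
  have hN2 : 0 < N ^ 2 := by positivity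
  have h' := h.normalize hN
  have hS' : alphaC / 2 - ε ≤ a / N ^ 2 + b / N ^ 2 + c / N ^ 2 := by
    rwa [← add_div, ← add_div, le_div_iff₀ hN2]
  rcases le_or_gt (b / N ^ 2) ξ with hb | hb
  · exact Or.inl ((div_le_iff₀ hN2).1 hb)
  · have ht := h'.sub_le_mul_ε_of_sub_le (by linarith) hS' (h'.sub_le_of_lt_b hξ hξ' hεξ hS' hb)
    have hac := h'.a_add_c_le (by linarith) hS' ht
    rw [← add_div, div_le_iff₀ hN2] at hac
    exact Or.inr (hac.trans (mul_le_mul_of_nonneg_right (by linarith [h'.ε_nonneg]) hN2.le))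

end EdgeProfile

/-- **Proposition (graphs with few type-1/type-2 paths).** For every `ξ > 0` there are
`δ > 0` and `n₀` such that for all `n ≥ n₀`: if `G` is an `n`-vertex graph with a vertex
partition `V₁ ∪ V₂` such that (i) the number of type-1 and type-2 paths is at most
`δn⁴`, (ii) `||V₁| − γn| ≤ δn`, and (iii) `|G[V₂]| ≤ (α/2 + δ)|V₂|²`, then
`|G| ≤ (α/2 + ξ)n²`; moreover, if also `|G| ≥ (α/2 − δ)n²`, then either
`|G[V₁,V₂]| ≤ ξn²` or `|G[V₁]| + |G[V₂]| ≤ ξn²`. -/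
theorem P4_free_structure (ξ : ℝ) (hξ : 0 < ξ) :
    ∃ δ : ℝ, 0 < δ ∧ ∃ n₀ : ℕ, ∀ n : ℕ, n₀ ≤ n →
      ∀ G : Finset (Finset (Fin n)), IsGraph G →
        ∀ V₁ V₂ : Finset (Fin n), V₁ ∪ V₂ = Finset.univ → Disjoint V₁ V₂ →
          ((type1Paths G V₁ V₂ + type2Paths G V₁ V₂ : ℕ) : ℝ) ≤ δ * (n : ℝ) ^ 4 →
          |(V₁.card : ℝ) - gammaC * (n : ℝ)| ≤ δ * (n : ℝ) →
          ((G.filter (fun e => e ⊆ V₂)).card : ℝ) ≤ (alphaC / 2 + δ) * (V₂.card : ℝ) ^ 2 →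
          (G.card : ℝ) ≤ (alphaC / 2 + ξ) * (n : ℝ) ^ 2 ∧
          ((alphaC / 2 - δ) * (n : ℝ) ^ 2 ≤ (G.card : ℝ) →
            ((G.filter (fun e => (e ∩ V₁).card = 1)).card : ℝ) ≤ ξ * (n : ℝ) ^ 2 ∨
            ((G.filter (fun e => e ⊆ V₁)).card : ℝ)
                + ((G.filter (fun e => e ⊆ V₂)).card : ℝ) ≤ ξ * (n : ℝ) ^ 2) := by
  obtain ⟨ξ', hξ', hξ'ξ, hξ'1⟩ : ∃ ξ' : ℝ, 0 < ξ' ∧ ξ' ≤ ξ ∧ ξ' ≤ 1 / 100 :=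
    ⟨min ξ (1 / 100), lt_min hξ (by norm_num), min_le_left _ _, min_le_right _ _⟩
  set ε := ξ' / 10000 with hεξ
  have hε : 0 < ε := by positivity
  refine ⟨ε ^ 3, by positivity, ⌈4 / ε⌉₊, fun n hn G hG V₁ V₂ hU hD hpaths hV₁ hE₂ => ?_⟩
  obtain rfl : V₂ = V₁ᶜ := (IsCompl.of_eq hD.eq_bot hU).compl_eq.symm
  have hεn : 4 ≤ ε * n := by
    rw [mul_comm, ← div_le_iff₀ hε]; exact Nat.ceil_le.1 hn
  have hN : (0 : ℝ) < n := by nlinarith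
  have hprof := edgeProfile_of_few_paths hG V₁ hε (by linarith) hεn hpaths hV₁ hE₂
  have hcard : (G.card : ℝ) = (G.filter (· ⊆ V₁)).card
      + (G.filter (fun e => (e ∩ V₁).card = 1)).card + (G.filter (· ⊆ V₁ᶜ)).card := by
    exact_mod_cast card_eq_add_card_cross_add hG V₁
  have hε3 : ε ^ 3 ≤ ε := pow_le_of_le_one hε.le (by linarith) (by norm_num)
  rw [hcard]
  refine ⟨(hprof.sum_le hN (by linarith)).trans (by gcongr; linarith), fun hlow => ?_⟩
  have hS := (mul_le_mul_of_nonneg_right (by linarith : alphaC / 2 - ε ≤ alphaC / 2 - ε ^ 3)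
    (sq_nonneg (n : ℝ))).trans hlow
  rcases hprof.b_le_or_a_add_c_le hN hξ' hξ'1 hεξ.le hS with h | h
  · exact Or.inl (h.trans (by gcongr))
  · exact Or.inr (h.trans (by gcongr))
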